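/- arXiv:0911.1677 — 7 statements merged into one kernel-verified Lean document; each statement's English description precedes it below -/
import Mathlib

section
/- Let R be a finite nontrivial Boolean ring with |R| = 2^N. Then the number of logical primes in R is exactly N. -/
/-!
Viewed as a Boolean algebra (`a ≤ b ↔ a * b = a`, complement `1 + a`), a Boolean ring has
`p` as a logical prime exactly when `1 + p` is an atom. A finite Boolean algebra is isomorphic to
the power set of its atoms, so a ring with `2 ^ N` elements has `N` atoms, hence `N` logical
primes.
-/

/-- An element `p` of a Boolean ring is a logical prime if `p ≠ 1` and
`p * a = 0` implies `a = 0` or `a = 1 + p`. -/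
def IsLogicalPrime {R : Type*} [BooleanRing R] (p : R) : Prop :=
  p ≠ 1 ∧ ∀ a : R, p * a = 0 → a = 0 ∨ a = 1 + p

theorem isAtom_iff_le_iff {α : Type*} [PartialOrder α] [OrderBot α] {a : α} :
    IsAtom a ↔ a ≠ ⊥ ∧ ∀ b ≤ a, b = ⊥ ∨ b = a :=
  ⟨fun h => ⟨h.1, fun _ => h.le_iff.1⟩,
    fun h => ⟨h.1, fun b hb => (h.2 b hb.le).resolve_right hb.ne⟩⟩

theorem BooleanAlgebra.card_eq_two_pow_card_atoms (α : Type*) [BooleanAlgebra α] [Fintype α] :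
    Nat.card α = 2 ^ Nat.card {a : α // IsAtom a} := by
  classical
  let _ := Fintype.toCompleteAtomicBooleanAlgebra α
  rw [Nat.card_congr CompleteAtomicBooleanAlgebra.toSetOfIsAtom.toEquiv, Nat.card_eq_fintype_card,
    Fintype.card_set, Nat.card_eq_fintype_card]

section BooleanRing

variable {R : Type*} [BooleanRing R]

theorem BooleanRing.mul_eq_zero_iff_mul_one_add_eq {p a : R} :
    p * a = 0 ↔ a * (1 + p) = a := by
  rw [mul_add, mul_one, add_eq_left, mul_comm]

theorem isLogicalPrime_iff_isAtom {p : R} : IsLogicalPrime p ↔ IsAtom (toBoolAlg (1 + p)) := by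
  simp only [isAtom_iff_le_iff, IsLogicalPrime, ← toBoolAlg.forall_congr_right,
    ← ofBoolAlg_mul_ofBoolAlg_eq_left_iff, ofBoolAlg_toBoolAlg,
    BooleanRing.mul_eq_zero_iff_mul_one_add_eq, ← toBoolAlg_zero, toBoolAlg_inj, ne_eq,
    BooleanRing.add_eq_zero', eq_comm (a := (1 : R))]

variable (R) in
def logicalPrimeEquivAtoms : {p : R // IsLogicalPrime p} ≃ {a : AsBoolAlg R // IsAtom a} :=
  ((Equiv.addLeft 1).trans toBoolAlg).subtypeEquiv fun _ => isLogicalPrime_iff_isAtom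

end BooleanRing

theorem card_logical_primes_general (R : Type*) [BooleanRing R] [Fintype R]
    (N : ℕ) (hcard : Fintype.card R = 2 ^ N) :
    Nat.card {p : R // IsLogicalPrime p} = N := by
  have : Fintype (AsBoolAlg R) := .ofEquiv R toBoolAlg
  have hatoms : 2 ^ Nat.card {a : AsBoolAlg R // IsAtom a} = 2 ^ N := by
    rw [← BooleanAlgebra.card_eq_two_pow_card_atoms, ← hcard, Nat.card_congr toBoolAlg.symm,
      Nat.card_eq_fintype_card]
  rw [Nat.card_congr (logicalPrimeEquivAtoms R)]
  exact Nat.pow_right_injective le_rfl hatoms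

/-- In a finite nontrivial Boolean ring of cardinality `2 ^ N`, there are
exactly `N` logical primes. -/
theorem card_logical_primes (R : Type*) [BooleanRing R] [Fintype R]
    [Nontrivial R] (N : ℕ) (hcard : Fintype.card R = 2 ^ N) :
    Nat.card {p : R // IsLogicalPrime p} = N :=
  card_logical_primes_general R N hcard
end

section
/- Let R be a finite nontrivial Boolean ring. Every element a ∈ R has a unique decomposition into primes: there exists a unique finite set I of logical primes of R such that a equals the product of the elements of I (the empty product being 1, so a = 1 corresponds to I = ∅, and a = 0 corresponds to I = the set of all primes). -/
section BooleanAlgebra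

variable {α : Type*} [BooleanAlgebra α] {a : α}

theorem IsCoatom.infIrred (ha : IsCoatom a) : InfIrred a := by
  refine ⟨fun hmax => ha.1 hmax.eq_top, fun b c hbc => ?_⟩
  by_contra! h
  have hb : b = ⊤ := ha.2 b (lt_of_le_of_ne (hbc ▸ inf_le_left) h.1.symm)
  exact h.2 (by rw [← hbc, hb, top_inf_eq])

theorem InfIrred.isCoatom (ha : InfIrred a) : IsCoatom a := by
  refine ⟨fun h => ha.1 (h ▸ isMax_top), fun b hab => ?_⟩
  by_contra hb
  have hsplit : b ⊓ (a ⊔ bᶜ) = a := by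
    rw [inf_sup_left, inf_compl_eq_bot, sup_bot_eq, inf_eq_right.2 hab.le]
  rcases ha.2 hsplit with h | h
  · exact hab.ne h.symm
  · exact hb (compl_le_self.1 ((le_sup_right.trans h.le).trans hab.le))

theorem IsCoatom.mem_of_finset_inf_le {s : Finset α} (ha : IsCoatom a)
    (hs : ∀ p ∈ s, IsCoatom p) (h : s.inf id ≤ a) : a ∈ s := by
  obtain ⟨p, hp, hpa⟩ := ha.infIrred.infPrime.finset_inf_le.1 h
  rwa [(hs p hp).le_iff_eq ha.1 |>.1 hpa]

theorem Finset.eq_of_inf_eq_of_isCoatom {s t : Finset α} (hs : ∀ p ∈ s, IsCoatom p)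
    (ht : ∀ p ∈ t, IsCoatom p) (h : s.inf id = t.inf id) : s = t := by
  have subset {s t : Finset α} (hs : ∀ p ∈ s, IsCoatom p) (ht : ∀ p ∈ t, IsCoatom p)
      (h : s.inf id = t.inf id) : s ⊆ t :=
    fun p hp => (hs p hp).mem_of_finset_inf_le ht (h ▸ Finset.inf_le hp)
  exact (subset hs ht h).antisymm (subset ht hs h.symm)

end BooleanAlgebra

open scoped BooleanAlgebraOfBooleanRing

namespace BooleanRing

variable {R : Type*} [BooleanRing R]

theorem prod_eq_inf (s : Finset R) : ∏ p ∈ s, p = s.inf id := by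
  classical
  induction s using Finset.induction_on with
  | empty => rfl
  | insert p s hp ih => rw [Finset.prod_insert hp, Finset.inf_insert, ih]; rfl

theorem mul_eq_zero_iff_le_compl {p a : R} : p * a = 0 ↔ a ≤ pᶜ :=
  (le_compl_iff_disjoint_left.trans disjoint_iff).symm

theorem isLogicalPrime_iff_isCoatom {p : R} : IsLogicalPrime p ↔ IsCoatom p := by
  rw [← isAtom_compl, IsLogicalPrime]
  simp only [mul_eq_zero_iff_le_compl]
  constructor
  · rintro ⟨hp1, hp⟩
    exact ⟨fun h => hp1 (compl_eq_bot.1 h), fun b hb => (hp b hb.le).resolve_right hb.ne⟩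
  · intro hp
    exact ⟨fun h => hp.1 (compl_eq_bot.2 h), fun b hb => hp.le_iff.1 hb⟩

end BooleanRing

theorem unique_prime_factorization_general (R : Type*) [BooleanRing R] [Fintype R] (a : R) :
    ∃! I : Finset R, (∀ p ∈ I, IsLogicalPrime p) ∧ a = ∏ p ∈ I, p := by
  simp only [BooleanRing.isLogicalPrime_iff_isCoatom, BooleanRing.prod_eq_inf]
  obtain ⟨I, hIa, hI⟩ := exists_infIrred_decomposition a
  have hIc : ∀ p ∈ I, IsCoatom p := fun p hp => (hI hp).isCoatom
  refine ⟨I, ⟨hIc, hIa.symm⟩, fun J ⟨hJc, hJa⟩ => ?_⟩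
  exact Finset.eq_of_inf_eq_of_isCoatom hJc hIc (hJa.symm.trans hIa.symm)

/-- Every element of a finite nontrivial Boolean ring has a unique
decomposition as a product of logical primes. -/
theorem unique_prime_factorization (R : Type*) [BooleanRing R] [Fintype R]
    [Nontrivial R] [DecidableEq R] (a : R) :
    ∃! I : Finset R, (∀ p ∈ I, IsLogicalPrime p) ∧ a = ∏ p ∈ I, p :=
  unique_prime_factorization_general R a
end

section
/- Let R be a finite nontrivial Boolean ring. Every element a ∈ R has a unique representation as a sum of negated primes: there exists a unique finite set J of logical primes of R such that a = ∑_{p ∈ J} (1 + p). -/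
open scoped BooleanAlgebraOfBooleanRing

section

variable {R : Type*} [BooleanRing R]

theorem BooleanRing.le_iff_mul_eq_left {a b : R} : a ≤ b ↔ a * b = a := inf_eq_left.symm

theorem isLogicalPrime_iff_isCoatom {p : R} : IsLogicalPrime p ↔ IsCoatom p := by
  rw [← isAtom_compl]
  have hle (a : R) : a ≤ pᶜ ↔ p * a = 0 := le_compl_iff_disjoint_left.trans disjoint_iff
  refine ⟨fun ⟨hp1, hp⟩ => ⟨compl_eq_bot.not.2 hp1, fun b hb => ?_⟩,
    fun h => ⟨compl_eq_bot.not.1 h.1, fun a ha => h.le_iff.1 ((hle a).2 ha)⟩⟩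
  exact (hp b ((hle b).1 hb.le)).resolve_right hb.ne

theorem IsAtom.mul_sum [DecidableEq R] {e : R} (he : IsAtom e) {S : Finset R}
    (hS : ∀ f ∈ S, IsAtom f) : e * ∑ f ∈ S, f = if e ∈ S then e else 0 := by
  rw [Finset.mul_sum, ← Finset.sum_ite_eq S e fun _ => e]
  refine Finset.sum_congr rfl fun f hf => ?_
  split_ifs with hef
  · rw [← hef, BooleanRing.mul_self]
  · exact disjoint_iff.1 (he.disjoint_of_ne (hS f hf) hef)

theorem IsAtom.mem_iff_le_sum {e : R} (he : IsAtom e) {S : Finset R} (hS : ∀ f ∈ S, IsAtom f) :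
    e ∈ S ↔ e ≤ ∑ f ∈ S, f := by
  classical
  rw [BooleanRing.le_iff_mul_eq_left, he.mul_sum hS]
  split_ifs with heS
  · exact iff_of_true heS rfl
  · exact iff_of_false heS he.1.symm

theorem BooleanRing.exists_isAtom_sum_eq [Finite R] (a : R) :
    ∃ S : Finset R, (∀ e ∈ S, IsAtom e) ∧ ∑ e ∈ S, e = a := by
  classical
  induction a using WellFoundedLT.induction with
  | _ a ih =>
    obtain rfl | ⟨e, he, hea⟩ := eq_bot_or_exists_atom_le a
    · exact ⟨∅, by simp, rfl⟩
    rw [le_iff_mul_eq_left] at hea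
    have hlt : a + e < a := by
      refine lt_of_le_of_ne (le_iff_mul_eq_left.2 ?_) fun h => he.1 ?_
      · rw [add_mul, mul_self, hea]
      · exact add_eq_left.1 h
    obtain ⟨S, hS, hsum⟩ := ih _ hlt
    have heS : e ∉ S := by
      rw [he.mem_iff_le_sum hS, hsum, le_iff_mul_eq_left, mul_add, mul_self, hea, add_self]
      exact he.1.symm
    refine ⟨insert e S, Finset.forall_mem_insert _ _ _ |>.2 ⟨he, hS⟩, ?_⟩
    rw [Finset.sum_insert heS, hsum, add_comm a, ← add_assoc, add_self, zero_add]

theorem BooleanRing.existsUnique_isAtom_sum_eq [Finite R] (a : R) :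
    ∃! S : Finset R, (∀ e ∈ S, IsAtom e) ∧ ∑ e ∈ S, e = a := by
  obtain ⟨S, hS, hsum⟩ := exists_isAtom_sum_eq a
  refine ⟨S, ⟨hS, hsum⟩, fun T ⟨hT, hTsum⟩ => Finset.ext fun e => ?_⟩
  by_cases he : IsAtom e
  · rw [he.mem_iff_le_sum hT, he.mem_iff_le_sum hS, hsum, hTsum]
  · exact iff_of_false (mt (hT e) he) (mt (hS e) he)

end

theorem unique_negated_prime_sum_general (R : Type*) [BooleanRing R] [Fintype R] (a : R) :
    ∃! J : Finset R, (∀ p ∈ J, IsLogicalPrime p) ∧ a = ∑ p ∈ J, (1 + p) := by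
  let c : Finset R ≃ Finset R := (compl_involutive (α := R)).toPerm.finsetCongr
  refine (c.existsUnique_congr fun J => ?_).2 (BooleanRing.existsUnique_isAtom_sum_eq a)
  simp only [c, Equiv.finsetCongr_apply, Finset.forall_mem_map, Finset.sum_map,
    Equiv.coe_toEmbedding, Function.Involutive.coe_toPerm, isAtom_compl,
    isLogicalPrime_iff_isCoatom, eq_comm (a := a)]
  rfl

/-- Every element of a finite nontrivial Boolean ring has a unique
representation as a sum of negated logical primes. -/
theorem unique_negated_prime_sum (R : Type*) [BooleanRing R] [Fintype R]
    [Nontrivial R] [DecidableEq R] (a : R) :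
    ∃! J : Finset R, (∀ p ∈ J, IsLogicalPrime p) ∧ a = ∑ p ∈ J, (1 + p) :=
  unique_negated_prime_sum_general R a
end

section
/- Let R be a finite nontrivial Boolean ring and let T : R → ℤ/2ℤ be a ring homomorphism. Then there is exactly one logical prime p of R with T(1 + p) = 1, and T(1 + q) = 0 for every logical prime q ≠ p. -/
/-- Atoms for the order `a ≤ b ↔ a * b = a`. -/
def IsBooleanAtom {R : Type*} [BooleanRing R] (e : R) : Prop :=
  e ≠ 0 ∧ ∀ a : R, a * e = a → a = 0 ∨ a = e

section BooleanRing

variable {R : Type*} [BooleanRing R]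

theorem one_add_one_add (a : R) : 1 + (1 + a) = a := by
  rw [← add_assoc, BooleanRing.add_self, zero_add]

theorem isLogicalPrime_iff_isBooleanAtom_one_add {p : R} :
    IsLogicalPrime p ↔ IsBooleanAtom (1 + p) := by
  have hne : p ≠ 1 ↔ 1 + p ≠ 0 := not_congr (by rw [BooleanRing.add_eq_zero', eq_comm])
  have hle : ∀ a : R, p * a = 0 ↔ a * (1 + p) = a := fun a => by
    rw [mul_add, mul_one, add_eq_left, mul_comm]
  simp only [IsLogicalPrime, IsBooleanAtom, hne, hle]

theorem IsBooleanAtom.eq_of_mul_ne_zero {e f : R} (he : IsBooleanAtom e) (hf : IsBooleanAtom f)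
    (hef : e * f ≠ 0) : e = f := by
  have hef_e : e * f = e :=
    (he.2 (e * f) (by rw [mul_right_comm, BooleanRing.mul_self])).resolve_left hef
  have hef_f : e * f = f :=
    (hf.2 (e * f) (by rw [mul_assoc, BooleanRing.mul_self])).resolve_left hef
  rw [← hef_e, hef_f]

theorem IsBooleanAtom.eq_of_map_eq_one {S : Type*} [Semiring S] [Nontrivial S] (T : R →+* S)
    {e f : R} (he : IsBooleanAtom e) (hf : IsBooleanAtom f) (hTe : T e = 1) (hTf : T f = 1) :
    e = f :=
  he.eq_of_mul_ne_zero hf fun h =>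
    one_ne_zero (by rw [← T.map_zero, ← h, map_mul, hTe, hTf, one_mul])

theorem IsLogicalPrime.eq_of_map_one_add_eq_one {S : Type*} [Semiring S] [Nontrivial S]
    (T : R →+* S) {p q : R} (hp : IsLogicalPrime p) (hq : IsLogicalPrime q)
    (hTp : T (1 + p) = 1) (hTq : T (1 + q) = 1) : p = q :=
  add_left_cancel <| (isLogicalPrime_iff_isBooleanAtom_one_add.1 hp).eq_of_map_eq_one T
    (isLogicalPrime_iff_isBooleanAtom_one_add.1 hq) hTp hTq

theorem map_eq_zero_or_eq_one {S : Type*} [Semiring S] [IsDomain S] (T : R →+* S) (a : R) :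
    T a = 0 ∨ T a = 1 :=
  IsIdempotentElem.iff_eq_zero_or_one.1 ((BooleanRing.isIdempotentElem a).map T)

theorem prod_id_mul_of_mem {s : Finset R} {a : R} (ha : a ∈ s) :
    (∏ x ∈ s, x) * a = ∏ x ∈ s, x := by
  classical
  rw [← Finset.mul_prod_erase s (fun x => x) ha, mul_right_comm, BooleanRing.mul_self]

theorem exists_isBooleanAtom_map_eq_one [Fintype R] {S : Type*} [CommSemiring S] [IsDomain S]
    (T : R →+* S) : ∃ e : R, IsBooleanAtom e ∧ T e = 1 := by
  classical
  set e := ∏ x ∈ Finset.univ.filter (fun x => T x = 1), x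
  have hTe : T e = 1 := by
    rw [map_prod]
    exact Finset.prod_eq_one fun x hx => (Finset.mem_filter.1 hx).2
  have he_le : ∀ a : R, T a = 1 → e * a = e := fun a ha =>
    prod_id_mul_of_mem (Finset.mem_filter.2 ⟨Finset.mem_univ a, ha⟩)
  refine ⟨e, ⟨fun h => one_ne_zero (by rw [← hTe, h, map_zero]), fun a ha => ?_⟩, hTe⟩
  rcases map_eq_zero_or_eq_one T a with hTa | hTa
  · have hT1a : T (1 + a) = 1 := by rw [map_add, map_one, hTa, add_zero]
    left
    calc a = a * (e * (1 + a)) := by rw [he_le _ hT1a, ha]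
      _ = e * (a * (1 + a)) := by ring
      _ = 0 := by rw [BooleanRing.mul_one_add_self, mul_zero]
  · right
    rw [← ha, mul_comm, he_le a hTa]

theorem exists_isLogicalPrime_map_one_add_eq_one [Fintype R] {S : Type*} [CommSemiring S]
    [IsDomain S] (T : R →+* S) : ∃ p : R, IsLogicalPrime p ∧ T (1 + p) = 1 := by
  obtain ⟨e, he, hTe⟩ := exists_isBooleanAtom_map_eq_one T
  refine ⟨1 + e, ?_, by rwa [one_add_one_add]⟩
  rwa [isLogicalPrime_iff_isBooleanAtom_one_add, one_add_one_add]

end BooleanRing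

theorem hom_picks_unique_prime_general (R : Type*) [BooleanRing R] [Fintype R]
    (T : R →+* ZMod 2) :
    ∃! p : R, IsLogicalPrime p ∧ T (1 + p) = 1 ∧
      ∀ q : R, IsLogicalPrime q → q ≠ p → T (1 + q) = 0 := by
  obtain ⟨p, hp, hTp⟩ := exists_isLogicalPrime_map_one_add_eq_one T
  refine ⟨p, ⟨hp, hTp, fun q hq hqp => ?_⟩,
    fun q ⟨hq, hTq, _⟩ => hq.eq_of_map_one_add_eq_one T hp hTq hTp⟩
  exact (map_eq_zero_or_eq_one T (1 + q)).resolve_right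
    fun hTq => hqp (hq.eq_of_map_one_add_eq_one T hp hTq hTp)

/-- For every ring homomorphism `T : R → ℤ/2ℤ` from a finite nontrivial
Boolean ring there is exactly one logical prime `p` with `T (1 + p) = 1`,
and `T (1 + q) = 0` for every other logical prime `q`. -/
theorem hom_picks_unique_prime (R : Type*) [BooleanRing R] [Fintype R]
    [Nontrivial R] (T : R →+* ZMod 2) :
    ∃! p : R, IsLogicalPrime p ∧ T (1 + p) = 1 ∧
      ∀ q : R, IsLogicalPrime q → q ≠ p → T (1 + q) = 0 :=
  hom_picks_unique_prime_general R T
end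

section
/- Let R be a finite nontrivial Boolean ring with |R| = 2^N. Then the number of ring homomorphisms from R to ℤ/2ℤ is exactly N (equivalently, it equals the number of logical primes of R). -/
/-!
Call `e` an atom of a Boolean ring if `e ≠ 0` and `e * a ∈ {0, e}` for every `a`; then `p` is a
logical prime exactly when `1 + p` is an atom. In a finite Boolean ring the product `e` of all
elements outside a prime ideal `P` is an atom, with `e * b = e` exactly when `b ∉ P`. Applied to a
maximal ideal containing `1 + c`, this gives an atom below any `c ≠ 0`; applied to `P = ker f`, it
shows that every `f : R →+* ZMod 2` is `a ↦ [e * a = e]` for a unique atom `e`. Hence evaluation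
at the atoms is a ring isomorphism `R ≃ (atoms → ZMod 2)`, so `R` has `N` atoms, and therefore
`N` homomorphisms to `ZMod 2` and `N` logical primes.
-/

section BoolAtoms

variable {R : Type*} [BooleanRing R]

def IsBoolAtom (e : R) : Prop :=
  e ≠ 0 ∧ ∀ a : R, e * a = 0 ∨ e * a = e

theorem isLogicalPrime_iff_isBoolAtom_one_add {p : R} :
    IsLogicalPrime p ↔ IsBoolAtom (1 + p) := by
  constructor
  · rintro ⟨hp, hann⟩
    refine ⟨fun h => hp ((BooleanRing.add_eq_zero' _ _).1 h).symm, fun a => hann _ ?_⟩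
    rw [← mul_assoc, BooleanRing.mul_one_add_self, zero_mul]
  · rintro ⟨hne, hdich⟩
    refine ⟨fun hp => hne (by rw [hp, BooleanRing.add_self]), fun a ha => ?_⟩
    have hfix : (1 + p) * a = a := by rw [add_mul, one_mul, ha, add_zero]
    exact hfix ▸ hdich a

def logicalPrimeEquivBoolAtom : {p : R // IsLogicalPrime p} ≃ {e : R // IsBoolAtom e} :=
  (Equiv.addLeft 1).subtypeEquiv fun _ => isLogicalPrime_iff_isBoolAtom_one_add

namespace IsBoolAtom

variable {e e' : R}

theorem eq_of_mul_ne_zero (he : IsBoolAtom e) (he' : IsBoolAtom e') (h : e * e' ≠ 0) :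
    e = e' := by
  have h₁ : e * e' = e := (he.2 e').resolve_left h
  have h₂ : e' * e = e' := (he'.2 e).resolve_left (by rwa [mul_comm])
  rw [← h₁, mul_comm, h₂]

open Classical in
noncomputable def toRingHom (he : IsBoolAtom e) : R →+* ZMod 2 where
  toFun a := if e * a = e then 1 else 0
  map_one' := by simp
  map_mul' a b := by
    have hmul : e * (a * b) = e * a * (e * b) := by
      rw [mul_mul_mul_comm, BooleanRing.mul_self]
    rcases he.2 a with ha | ha <;> rcases he.2 b with hb | hb <;>
      simp [hmul, ha, hb, he.1.symm, BooleanRing.mul_self]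
  map_zero' := by simp [he.1.symm]
  map_add' a b := by
    rcases he.2 a with ha | ha <;> rcases he.2 b with hb | hb <;>
      simp [mul_add, ha, hb, he.1.symm, BooleanRing.add_self, CharTwo.add_self_eq_zero]

theorem toRingHom_apply_eq_one_iff (he : IsBoolAtom e) {a : R} :
    he.toRingHom a = 1 ↔ e * a = e := by
  simp [toRingHom]

theorem toRingHom_apply_eq_zero_iff (he : IsBoolAtom e) {a : R} :
    he.toRingHom a = 0 ↔ e * a = 0 := by
  rcases he.2 a with ha | ha <;> simp [toRingHom, ha, he.1.symm, he.1]

open Classical in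
theorem toRingHom_apply_atom (he : IsBoolAtom e) (he' : IsBoolAtom e') :
    he.toRingHom e' = if e = e' then 1 else 0 := by
  split_ifs with h
  · subst h; exact he.toRingHom_apply_eq_one_iff.2 (BooleanRing.mul_self e)
  · exact he.toRingHom_apply_eq_zero_iff.2 (not_not.1 (mt (he.eq_of_mul_ne_zero he') h))

end IsBoolAtom

namespace Ideal

theorem one_add_notMem_of_mem {P : Ideal R} (hP : P ≠ ⊤) {b : R} (hb : b ∈ P) : 1 + b ∉ P :=
  fun h => hP <| (P.eq_top_iff_one).2 <| by
    simpa [add_assoc, BooleanRing.add_self] using P.add_mem h hb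

variable [Fintype R]

open Classical in
noncomputable def prodCompl (P : Ideal R) : R :=
  ∏ a ∈ Finset.univ.filter (· ∉ P), a

variable {P : Ideal R}

theorem prodCompl_mul_of_notMem {b : R} (hb : b ∉ P) : P.prodCompl * b = P.prodCompl := by
  classical
  have hmem : b ∈ Finset.univ.filter (· ∉ P) := by simpa using hb
  rw [prodCompl, ← Finset.mul_prod_erase _ _ hmem, mul_right_comm, BooleanRing.mul_self]

theorem prodCompl_notMem [P.IsPrime] : P.prodCompl ∉ P := by
  classical
  simp [prodCompl, Ideal.IsPrime.prod_mem_iff]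

theorem prodCompl_mul_eq_self_iff [P.IsPrime] {b : R} :
    P.prodCompl * b = P.prodCompl ↔ b ∉ P :=
  ⟨fun h hb => prodCompl_notMem (h ▸ P.mul_mem_left _ hb), prodCompl_mul_of_notMem⟩

theorem isBoolAtom_prodCompl [hP : P.IsPrime] : IsBoolAtom P.prodCompl := by
  refine ⟨fun h => prodCompl_notMem (h ▸ P.zero_mem), fun b => ?_⟩
  by_cases hb : b ∈ P
  · have hb' : 1 + b ∉ P := one_add_notMem_of_mem hP.ne_top hb
    left
    simpa [mul_add, add_eq_zero_iff_eq_neg] using prodCompl_mul_of_notMem hb'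
  · exact Or.inr (prodCompl_mul_of_notMem hb)

end Ideal

variable [Fintype R]

theorem exists_isBoolAtom_mul_eq_self {c : R} (hc : c ≠ 0) :
    ∃ e : R, IsBoolAtom e ∧ e * c = e := by
  have hunit : ¬IsUnit (1 + c) := fun hu =>
    hc <| add_eq_left.1 <| (IsIdempotentElem.iff_eq_one_of_isUnit hu).1 (BooleanRing.mul_self _)
  obtain ⟨M, hM, hcM⟩ := exists_max_ideal_of_mem_nonunits hunit
  have hc : c ∉ M := by
    simpa [← add_assoc, BooleanRing.add_self] using Ideal.one_add_notMem_of_mem hM.ne_top hcM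
  exact ⟨M.prodCompl, Ideal.isBoolAtom_prodCompl, Ideal.prodCompl_mul_of_notMem hc⟩

attribute [local instance] RingHom.ker_isPrime

noncomputable def boolAtomEquivRingHom : {e : R // IsBoolAtom e} ≃ (R →+* ZMod 2) where
  toFun e := e.2.toRingHom
  invFun f := ⟨(RingHom.ker f).prodCompl, Ideal.isBoolAtom_prodCompl⟩
  left_inv e := by
    have he : (e : R) ∉ RingHom.ker e.2.toRingHom := by
      simp [e.2.toRingHom_apply_eq_one_iff.2 (BooleanRing.mul_self (e : R))]
    have hprod := Ideal.prodCompl_mul_of_notMem he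
    exact Subtype.ext <| Ideal.isBoolAtom_prodCompl.eq_of_mul_ne_zero e.2 <|
      hprod.symm ▸ Ideal.isBoolAtom_prodCompl.1
  right_inv f := by
    have eq_of_eq_one_iff : ∀ x y : ZMod 2, (x = 1 ↔ y = 1) → x = y := by decide
    have ne_zero_iff : ∀ x : ZMod 2, x ≠ 0 ↔ x = 1 := by decide
    ext a
    refine eq_of_eq_one_iff _ _ ?_
    rw [IsBoolAtom.toRingHom_apply_eq_one_iff, Ideal.prodCompl_mul_eq_self_iff, RingHom.mem_ker]
    exact ne_zero_iff _

noncomputable def evalBoolAtoms : R →+* ({e : R // IsBoolAtom e} → ZMod 2) :=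
  RingHom.pi fun e => e.2.toRingHom

theorem evalBoolAtoms_injective : Function.Injective (evalBoolAtoms (R := R)) := by
  refine (injective_iff_map_eq_zero _).2 fun c hc => by_contra fun hc0 => ?_
  obtain ⟨e, he, hec⟩ := exists_isBoolAtom_mul_eq_self hc0
  have := congrFun hc ⟨e, he⟩
  simp [evalBoolAtoms, he.toRingHom_apply_eq_one_iff.2 hec] at this

theorem evalBoolAtoms_surjective : Function.Surjective (evalBoolAtoms (R := R)) := by
  classical
  intro g
  refine ⟨∑ e ∈ Finset.univ.filter (g · = 1), (e : R), funext fun e' => ?_⟩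
  change e'.2.toRingHom _ = g e'
  rw [map_sum, Finset.sum_congr rfl fun e _ => e'.2.toRingHom_apply_atom e.2]
  simp only [Subtype.coe_inj, Finset.sum_ite_eq, Finset.mem_filter, Finset.mem_univ, true_and]
  generalize g e' = x
  revert x
  decide

theorem card_eq_two_pow_card_boolAtoms : Nat.card R = 2 ^ Nat.card {e : R // IsBoolAtom e} := by
  rw [Nat.card_congr (RingEquiv.ofBijective evalBoolAtoms
    ⟨evalBoolAtoms_injective, evalBoolAtoms_surjective⟩).toEquiv, Nat.card_fun, Nat.card_zmod]

end BoolAtoms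

theorem card_homs_to_zmod_two_general (R : Type*) [BooleanRing R] [Fintype R]
    (N : ℕ) (hcard : Fintype.card R = 2 ^ N) :
    Nat.card (R →+* ZMod 2) = N ∧
      Nat.card (R →+* ZMod 2) = Nat.card {p : R // IsLogicalPrime p} := by
  have hatoms : Nat.card {e : R // IsBoolAtom e} = N :=
    Nat.pow_right_injective le_rfl <| show 2 ^ _ = 2 ^ N by
      rw [← card_eq_two_pow_card_boolAtoms, Nat.card_eq_fintype_card, hcard]
  have hhoms := Nat.card_congr (boolAtomEquivRingHom (R := R))
  have hprimes := Nat.card_congr (logicalPrimeEquivBoolAtom (R := R))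
  exact ⟨by rw [← hhoms, hatoms], by rw [← hhoms, hprimes]⟩

/-- A finite nontrivial Boolean ring of cardinality `2 ^ N` has exactly `N`
ring homomorphisms to `ℤ/2ℤ` (as many as it has logical primes). -/
theorem card_homs_to_zmod_two (R : Type*) [BooleanRing R] [Fintype R]
    [Nontrivial R] (N : ℕ) (hcard : Fintype.card R = 2 ^ N) :
    Nat.card (R →+* ZMod 2) = N ∧
      Nat.card (R →+* ZMod 2) = Nat.card {p : R // IsLogicalPrime p} :=
  card_homs_to_zmod_two_general R N hcard
end

section
/- Let R be a finite nontrivial Boolean ring with |R| = 2^m for a natural number m. Then R is isomorphic as a ring to the product ring (ℤ/2ℤ)^m. -/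
/-- Units in a Boolean ring are trivial. -/
lemma booleanRing_isUnit_eq_one {R : Type*} [BooleanRing R] {e : R} (h : IsUnit e) : e = 1 := by
  rcases h.exists_right_inv with ⟨b, hb⟩
  calc e = e * (e * b) := by rw [hb, mul_one]
    _ = (e * e) * b := by ring
    _ = 1 := by rw [BooleanRing.mul_self, hb]

/-- Quotients of Boolean rings are Boolean. -/
instance booleanRing_quotient {R : Type*} [BooleanRing R] (I : Ideal R) :
    BooleanRing (R ⧸ I) where
  isIdempotentElem x := by
    obtain ⟨a, rfl⟩ := Ideal.Quotient.mk_surjective x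
    show _ * _ = _
    rw [← map_mul, BooleanRing.mul_self]

/-- `(Fin 1 → ZMod 2)` is just `ZMod 2`. -/
def piOneRingEquiv : ZMod 2 ≃+* (Fin 1 → ZMod 2) where
  toFun a := fun _ => a
  invFun f := f 0
  left_inv _ := rfl
  right_inv f := funext fun i => by rw [Subsingleton.elim i 0]
  map_add' _ _ := rfl
  map_mul' _ _ := rfl

/-- Combining two pi types over `Fin`. -/
def sumPiRingEquiv (a b : ℕ) :
    ((Fin a → ZMod 2) × (Fin b → ZMod 2)) ≃+* (Fin (a + b) → ZMod 2) where
  toEquiv := (Equiv.sumArrowEquivProdArrow (Fin a) (Fin b) (ZMod 2)).symm.trans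
    (Equiv.piCongrLeft' (fun _ => ZMod 2) finSumFinEquiv)
  map_add' x y := funext fun i => by
    rcases h : finSumFinEquiv.symm i with j | j <;>
      simp [Equiv.sumArrowEquivProdArrow, Equiv.piCongrLeft', h]
  map_mul' x y := funext fun i => by
    rcases h : finSumFinEquiv.symm i with j | j <;>
      simp [Equiv.sumArrowEquivProdArrow, Equiv.piCongrLeft', h]

lemma boolean_ring_aux : ∀ (m : ℕ) (R : Type u) [BooleanRing R] [Fintype R] [Nontrivial R],
    Fintype.card R = 2 ^ m → Nonempty (R ≃+* (Fin m → ZMod 2)) := by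
  intro m
  induction m using Nat.strong_induction_on with
  | _ m ih =>
    intro R _ _ _ hcard
    by_cases hex : ∃ e : R, e ≠ 0 ∧ e ≠ 1
    · -- split along a nontrivial idempotent
      obtain ⟨e, he0, he1⟩ := hex
      set I : Ideal R := Ideal.span {e} with hI
      set J : Ideal R := Ideal.span {1 + e} with hJ
      have hIt : I ≠ ⊤ := by
        rw [hI, Ne, Ideal.span_singleton_eq_top]
        intro h; exact he1 (booleanRing_isUnit_eq_one h)
      have hJt : J ≠ ⊤ := by
        rw [hJ, Ne, Ideal.span_singleton_eq_top]
        intro h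
        have h1 : (1 : R) + e = 1 := booleanRing_isUnit_eq_one h
        exact he0 (by simpa using (add_eq_left).mp h1)
      have hcop : IsCoprime I J := by
        rw [Ideal.isCoprime_iff_sup_eq, eq_top_iff]
        intro x _
        have h1 : (1 : R) = e + (1 + e) := by
          rw [← add_assoc, add_comm e 1, add_assoc, BooleanRing.add_self, add_zero]
        have : (1 : R) ∈ I ⊔ J := by
          rw [h1]
          exact Submodule.add_mem_sup (Ideal.subset_span rfl) (Ideal.subset_span rfl)
        simpa using Ideal.mul_mem_left _ x this
      have hinf : I ⊓ J = ⊥ := by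
        rw [eq_bot_iff]
        rintro x ⟨hxI, hxJ⟩
        obtain ⟨a, ha⟩ := Ideal.mem_span_singleton'.mp hxI
        obtain ⟨b, hb⟩ := Ideal.mem_span_singleton'.mp hxJ
        have hex : e * x = x := by
          rw [← ha, mul_left_comm, BooleanRing.mul_self]
        have : x = 0 := by
          rw [← hex, ← hb]
          calc e * (b * (1 + e)) = b * (e * (1 + e)) := by ring
            _ = 0 := by rw [BooleanRing.mul_one_add_self, mul_zero]
        simp [this]
      -- the product decomposition
      let eqRP : R ≃+* (R ⧸ I) × (R ⧸ J) :=
        (RingEquiv.quotientBot R).symm.trans <|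
          (Ideal.quotEquivOfEq (by rw [hinf])).trans <|
            Ideal.quotientInfEquivQuotientProd I J hcop
      haveI : Nontrivial (R ⧸ I) := Ideal.Quotient.nontrivial_iff.mpr hIt
      haveI : Nontrivial (R ⧸ J) := Ideal.Quotient.nontrivial_iff.mpr hJt
      haveI : Fintype (R ⧸ I) := Fintype.ofFinite _
      haveI : Fintype (R ⧸ J) := Fintype.ofFinite _
      have hprod : Fintype.card (R ⧸ I) * Fintype.card (R ⧸ J) = 2 ^ m := by
        rw [← Fintype.card_prod, ← Fintype.card_congr eqRP.toEquiv, hcard]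
      obtain ⟨k₁, hk₁le, hk₁⟩ := (Nat.dvd_prime_pow Nat.prime_two).mp
        ⟨Fintype.card (R ⧸ J), hprod.symm⟩
      obtain ⟨k₂, hk₂le, hk₂⟩ := (Nat.dvd_prime_pow Nat.prime_two).mp
        ⟨Fintype.card (R ⧸ I), by rw [← hprod, mul_comm]⟩
      have hsum : k₁ + k₂ = m := by
        have : (2 : ℕ) ^ (k₁ + k₂) = 2 ^ m := by
          rw [pow_add, ← hk₁, ← hk₂, hprod]
        exact Nat.pow_right_injective (by norm_num) this
      have hk₁pos : 0 < k₁ := by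
        rcases Nat.eq_zero_or_pos k₁ with h | h
        · exfalso
          rw [h, pow_zero] at hk₁
          exact (Fintype.one_lt_card.trans_eq hk₁).false
        · exact h
      have hk₂pos : 0 < k₂ := by
        rcases Nat.eq_zero_or_pos k₂ with h | h
        · exfalso
          rw [h, pow_zero] at hk₂
          exact (Fintype.one_lt_card.trans_eq hk₂).false
        · exact h
      have hk₁lt : k₁ < m := by omega
      have hk₂lt : k₂ < m := by omega
      obtain ⟨f₁⟩ := ih k₁ hk₁lt (R ⧸ I) hk₁
      obtain ⟨f₂⟩ := ih k₂ hk₂lt (R ⧸ J) hk₂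
      exact ⟨eqRP.trans <| (RingEquiv.prodCongr f₁ f₂).trans <|
        (sumPiRingEquiv k₁ k₂).trans <|
          RingEquiv.piCongrLeft' (fun _ => ZMod 2) (finCongr hsum)⟩
    · -- every element is 0 or 1, so `R` has exactly two elements
      push_neg at hex
      haveI := Classical.decEq R
      have hsub : (Finset.univ : Finset R) ⊆ {0, 1} := by
        intro x _
        rcases eq_or_ne x 0 with h | h
        · simp [h]
        · simp [hex x h]
      have hle : Fintype.card R ≤ 2 := by
        calc Fintype.card R = (Finset.univ : Finset R).card := rfl
          _ ≤ ({0, 1} : Finset R).card := Finset.card_le_card hsub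
          _ ≤ 2 := Finset.card_insert_le _ _ |>.trans (by simp)
      have hcard2 : Fintype.card R = 2 :=
        le_antisymm hle Fintype.one_lt_card
      have hm : m = 1 := by
        have : (2 : ℕ) ^ m = 2 ^ 1 := by rw [← hcard, hcard2, pow_one]
        exact Nat.pow_right_injective (by norm_num) this
      subst hm
      haveI : CharP R 2 := CharTwo.of_one_ne_zero_of_two_eq_zero one_ne_zero
        (by rw [show (2:R) = 1 + 1 from one_add_one_eq_two.symm]; exact BooleanRing.add_self 1)
      exact ⟨(ZMod.ringEquiv R hcard2).symm.trans piOneRingEquiv⟩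

/-- Any finite nontrivial Boolean ring of cardinality `2 ^ m` is ring
isomorphic to the product ring `(ℤ/2ℤ)^m`. -/
theorem boolean_ring_iso_prod (R : Type*) [BooleanRing R] [Fintype R]
    [Nontrivial R] (m : ℕ) (hcard : Fintype.card R = 2 ^ m) :
    Nonempty (R ≃+* (Fin m → ZMod 2)) := by
  exact boolean_ring_aux m R hcard
end

section
/- Let R be a finite nontrivial Boolean ring, let a ∈ R, and let J be the unique finite set of logical primes with a = ∑_{p ∈ J} (1 + p). Then the number of ring homomorphisms T : R → ℤ/2ℤ with T(a) = 1 equals the cardinality of J. -/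
/-!
For a logical prime `p` the element `e = 1 + p` is an atom: `e * x` is `0` or `e` for every `x`,
and atoms coming from distinct logical primes are orthogonal. Hence `x ↦ [e * x ≠ 0]` is a ring
homomorphism `R → ℤ/2ℤ`, and it is the only one sending `e` to `1`, because any such `T` satisfies
`T x = T (e * x)`. A homomorphism `T` with `T a = 1` sends some summand `1 + p` of `a` to `1`, so
it is the homomorphism of some `p ∈ J`; by orthogonality, distinct primes give distinct
homomorphisms.
-/

namespace IsLogicalPrime

open BooleanRing

variable {R : Type*} [BooleanRing R] {p q : R}

theorem one_add_ne_zero (hp : IsLogicalPrime p) : 1 + p ≠ 0 :=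
  fun h => hp.1 ((add_eq_zero' 1 p).mp h).symm

theorem one_add_mul_eq_zero_or_eq (hp : IsLogicalPrime p) (x : R) :
    (1 + p) * x = 0 ∨ (1 + p) * x = 1 + p :=
  hp.2 _ (by rw [← mul_assoc, mul_one_add_self, zero_mul])

theorem one_add_mul_one_add_eq_zero (hp : IsLogicalPrime p) (hq : IsLogicalPrime q)
    (hne : p ≠ q) : (1 + p) * (1 + q) = 0 := by
  refine (hp.one_add_mul_eq_zero_or_eq (1 + q)).resolve_right fun hpq => hne ?_
  rcases hq.one_add_mul_eq_zero_or_eq (1 + p) with hqp | hqp <;> rw [mul_comm] at hqp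
  · exact absurd (hpq.symm.trans hqp) hp.one_add_ne_zero
  · exact add_left_cancel (hpq.symm.trans hqp)

open Classical in
noncomputable def ringHom (hp : IsLogicalPrime p) : R →+* ZMod 2 where
  toFun x := if (1 + p) * x = 0 then 0 else 1
  map_one' := by simp [hp.one_add_ne_zero]
  map_zero' := by simp
  map_mul' x y := by
    have hmul : (1 + p) * (x * y) = ((1 + p) * x) * ((1 + p) * y) := by
      rw [mul_mul_mul_comm, mul_self]
    rcases hp.one_add_mul_eq_zero_or_eq x with hx | hx <;>
      rcases hp.one_add_mul_eq_zero_or_eq y with hy | hy <;>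
      simp [hmul, hx, hy, mul_self, hp.one_add_ne_zero]
  map_add' x y := by
    rcases hp.one_add_mul_eq_zero_or_eq x with hx | hx <;>
      rcases hp.one_add_mul_eq_zero_or_eq y with hy | hy <;>
      simp [mul_add, hx, hy, add_self, hp.one_add_ne_zero]; decide

theorem ringHom_apply_one_add_self (hp : IsLogicalPrime p) : hp.ringHom (1 + p) = 1 := by
  simp [ringHom, mul_self, hp.one_add_ne_zero]

theorem ringHom_apply_one_add_of_ne (hp : IsLogicalPrime p) (hq : IsLogicalPrime q)
    (hne : p ≠ q) : hp.ringHom (1 + q) = 0 := by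
  simp [ringHom, hp.one_add_mul_one_add_eq_zero hq hne]

theorem eq_of_ringHom_eq (hp : IsLogicalPrime p) (hq : IsLogicalPrime q)
    (h : hp.ringHom = hq.ringHom) : p = q := by
  by_contra hne
  have h1 := hp.ringHom_apply_one_add_self
  rw [h, hq.ringHom_apply_one_add_of_ne hp (Ne.symm hne)] at h1
  exact zero_ne_one h1

theorem eq_ringHom_of_apply_one_add_eq_one (hp : IsLogicalPrime p) (T : R →+* ZMod 2)
    (hT : T (1 + p) = 1) : T = hp.ringHom := by
  ext x
  have hTx : T x = T ((1 + p) * x) := by rw [map_mul, hT, one_mul]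
  have hpx : hp.ringHom x = hp.ringHom ((1 + p) * x) := by
    rw [map_mul, hp.ringHom_apply_one_add_self, one_mul]
  rw [hTx, hpx]
  rcases hp.one_add_mul_eq_zero_or_eq x with h | h <;>
    simp only [h, map_zero, hT, hp.ringHom_apply_one_add_self]

end IsLogicalPrime

theorem card_homs_eval_one_general (R : Type*) [BooleanRing R] (a : R) (J : Finset R)
    (hJ : ∀ p ∈ J, IsLogicalPrime p) (ha : a = ∑ p ∈ J, (1 + p)) :
    Nat.card {T : R →+* ZMod 2 // T a = 1} = J.card := by
  have happly (p : R) (hp : p ∈ J) : (hJ p hp).ringHom a = 1 := by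
    rw [ha, map_sum, Finset.sum_eq_single p (fun q hq hqp =>
      (hJ p hp).ringHom_apply_one_add_of_ne (hJ q hq) hqp.symm) (absurd hp),
      (hJ p hp).ringHom_apply_one_add_self]
  let f : J → {T : R →+* ZMod 2 // T a = 1} := fun p => ⟨(hJ p p.2).ringHom, happly p p.2⟩
  have hf_inj : f.Injective := fun p q hpq =>
    Subtype.ext ((hJ p p.2).eq_of_ringHom_eq (hJ q q.2) (congrArg Subtype.val hpq))
  have hf_surj : f.Surjective := by
    rintro ⟨T, hT⟩
    obtain ⟨p, hp, hTp⟩ : ∃ p ∈ J, T (1 + p) ≠ 0 :=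
      Finset.exists_ne_zero_of_sum_ne_zero (by rw [← map_sum, ← ha, hT]; decide)
    exact ⟨⟨p, hp⟩, Subtype.ext ((hJ p hp).eq_ringHom_of_apply_one_add_eq_one T
      (Fin.eq_one_of_ne_zero _ hTp)).symm⟩
  rw [← Nat.card_eq_of_bijective f ⟨hf_inj, hf_surj⟩, Nat.card_eq_fintype_card, Fintype.card_coe]

/-- If `a = ∑_{p ∈ J} (1 + p)` with `J` a set of logical primes, then the
number of ring homomorphisms `T : R → ℤ/2ℤ` with `T a = 1` equals `|J|`. -/
theorem card_homs_eval_one (R : Type*) [BooleanRing R] [Fintype R]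
    [Nontrivial R] [DecidableEq R] (a : R) (J : Finset R)
    (hJ : ∀ p ∈ J, IsLogicalPrime p) (ha : a = ∑ p ∈ J, (1 + p)) :
    Nat.card {T : R →+* ZMod 2 // T a = 1} = J.card :=
  card_homs_eval_one_general R a J hJ ha
end
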